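/- arXiv:1911.07746 — 4 statements merged into one kernel-verified Lean document; each statement's English description precedes it below -/
import Mathlib

section
/- Under the hypotheses of the first-moment reward recursion, the vector of second moments satisfies E_{S\{0}}(R^2) = (I - P̃)^{-1} ( E(ρ̃^{∘2}) + 2 diag(E(ρ̃)) P̃ E_{S\{0}}(R) ), where ρ̃^{∘2} is the componentwise (Hadamard) square of the reward vector. -/
open MeasureTheory Matrix

lemma conv_sq_moment (μ η : Measure ℝ) [IsProbabilityMeasure μ] [IsProbabilityMeasure η]
    (hμ1 : Integrable (fun x => x) μ) (hη1 : Integrable (fun x => x) η)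
    (hμ2 : Integrable (fun x => x ^ 2) μ) (hη2 : Integrable (fun x => x ^ 2) η) :
    ∫ x, x ^ 2 ∂(μ.conv η) =
      (∫ x, x ^ 2 ∂μ) + 2 * (∫ x, x ∂μ) * (∫ x, x ∂η) + ∫ x, x ^ 2 ∂η := by
  have hmap : ∫ x, x ^ 2 ∂(μ.conv η) = ∫ p : ℝ × ℝ, (p.1 + p.2) ^ 2 ∂(μ.prod η) := by
    rw [Measure.conv, integral_map (by fun_prop) (by fun_prop)]
  rw [hmap]
  have h1 : Integrable (fun p : ℝ × ℝ => p.1 ^ 2 * 1) (μ.prod η) :=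
    hμ2.mul_prod (integrable_const 1)
  have h2 : Integrable (fun p : ℝ × ℝ => (2 * p.1) * p.2) (μ.prod η) :=
    (hμ1.const_mul 2).mul_prod hη1
  have h3 : Integrable (fun p : ℝ × ℝ => 1 * p.2 ^ 2) (μ.prod η) :=
    (integrable_const 1).mul_prod hη2
  have hre : ∀ p : ℝ × ℝ, (p.1 + p.2) ^ 2 =
      p.1 ^ 2 * 1 + (2 * p.1) * p.2 + 1 * p.2 ^ 2 := by intro p; ring
  simp_rw [hre]
  have hsplit := integral_add (h1.add h2) h3
  simp only [Pi.add_apply] at hsplit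
  rw [hsplit, integral_add h1 h2,
    integral_prod_mul (fun x : ℝ => x ^ 2) (fun _ : ℝ => (1:ℝ)),
    integral_prod_mul (fun x : ℝ => 2 * x) (fun y : ℝ => y),
    integral_prod_mul (fun _ : ℝ => (1:ℝ)) (fun y : ℝ => y ^ 2),
    integral_const_mul]
  simp
lemma det_one_sub_sub_ne_zero (N : ℕ) (P : Matrix (Fin (N + 1)) (Fin (N + 1)) ℝ)
    (hnonneg : ∀ i j, 0 ≤ P i j)
    (hrow : ∀ i, ∑ j, P i j = 1)
    (hirred : ∀ i j, ∃ k : ℕ, 0 < (P ^ k) i j) :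
    IsUnit ((1 : Matrix (Fin N) (Fin N) ℝ) -
      Matrix.of fun i j : Fin N => P i.succ j.succ).det := by
  set Q : Matrix (Fin N) (Fin N) ℝ := Matrix.of fun i j : Fin N => P i.succ j.succ with hQ
  -- nonnegativity of powers of P
  have hPpow : ∀ n, ∀ i j, 0 ≤ (P ^ n) i j := by
    intro n
    induction n with
    | zero => intro i j; simp [Matrix.one_apply]; positivity
    | succ n ih =>
      intro i j
      rw [pow_succ, Matrix.mul_apply]
      exact Finset.sum_nonneg fun l _ => mul_nonneg (ih i l) (hnonneg l j)
  -- row sums of powers of P are 1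
  have hProw : ∀ n, ∀ i, ∑ j, (P ^ n) i j = 1 := by
    intro n
    induction n with
    | zero => intro i; simp [Matrix.one_apply]
    | succ n ih =>
      intro i
      rw [pow_succ]
      simp only [Matrix.mul_apply]
      rw [Finset.sum_comm]
      calc ∑ l, ∑ j, (P ^ n) i l * P l j = ∑ l, (P ^ n) i l * ∑ j, P l j := by
            simp [Finset.mul_sum]
        _ = 1 := by simp [hrow, ih i]
  -- nonnegativity of powers of Q
  have hQpow : ∀ n, ∀ i j, 0 ≤ (Q ^ n) i j := by
    intro n
    induction n with
    | zero => intro i j; simp [Matrix.one_apply]; positivity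
    | succ n ih =>
      intro i j
      rw [pow_succ, Matrix.mul_apply]
      exact Finset.sum_nonneg fun l _ => mul_nonneg (ih i l) (hnonneg l.succ j.succ)
  -- entrywise bound Q^n ≤ P^n
  have hQle : ∀ n, ∀ i j, (Q ^ n) i j ≤ (P ^ n) i.succ j.succ := by
    intro n
    induction n with
    | zero => intro i j; simp [Matrix.one_apply, Fin.succ_inj]
    | succ n ih =>
      intro i j
      rw [pow_succ, pow_succ, Matrix.mul_apply, Matrix.mul_apply]
      calc ∑ l, (Q ^ n) i l * Q l j ≤ ∑ l : Fin N, (P ^ n) i.succ l.succ * P l.succ j.succ := by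
            refine Finset.sum_le_sum fun l _ => ?_
            exact mul_le_mul (ih i l) (le_of_eq rfl) (hnonneg l.succ j.succ) (hPpow n i.succ l.succ)
        _ ≤ ∑ l, (P ^ n) i.succ l * P l j.succ := by
            rw [Fin.sum_univ_succ]
            have h0 : 0 ≤ (P ^ n) i.succ 0 * P 0 j.succ :=
              mul_nonneg (hPpow n i.succ 0) (hnonneg 0 j.succ)
            linarith
  -- row sums of Q^n are at most 1
  have hQrow : ∀ n, ∀ i, ∑ j, (Q ^ n) i j ≤ 1 := by
    intro n i
    calc ∑ j, (Q ^ n) i j ≤ ∑ j : Fin N, (P ^ n) i.succ j.succ :=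
          Finset.sum_le_sum fun j _ => hQle n i j
      _ ≤ ∑ j, (P ^ n) i.succ j := by
          rw [Fin.sum_univ_succ]
          have := hPpow n i.succ 0
          linarith
      _ = 1 := hProw n i.succ
  -- for each i there is a power whose i-th row sum is < 1
  have hexists : ∀ i : Fin N, ∃ k : ℕ, ∑ j, (Q ^ k) i j < 1 := by
    intro i
    obtain ⟨k, hk⟩ := hirred i.succ 0
    refine ⟨k, ?_⟩
    have h1 : ∑ j, (Q ^ k) i j ≤ ∑ j : Fin N, (P ^ k) i.succ j.succ :=
      Finset.sum_le_sum fun j _ => hQle k i j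
    have h2 : (P ^ k) i.succ 0 + ∑ j : Fin N, (P ^ k) i.succ j.succ = 1 := by
      rw [← Fin.sum_univ_succ]; exact hProw k i.succ
    linarith
  -- row sums are monotone under adding powers
  have hmono : ∀ (k m : ℕ) (i : Fin N), ∑ j, (Q ^ (k + m)) i j ≤ ∑ j, (Q ^ k) i j := by
    intro k m i
    rw [pow_add]
    simp only [Matrix.mul_apply]
    rw [Finset.sum_comm]
    calc ∑ l, ∑ j, (Q ^ k) i l * (Q ^ m) l j
        = ∑ l, (Q ^ k) i l * ∑ j, (Q ^ m) l j := by simp [Finset.mul_sum]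
      _ ≤ ∑ l, (Q ^ k) i l * 1 :=
          Finset.sum_le_sum fun l _ =>
            mul_le_mul_of_nonneg_left (hQrow m l) (hQpow k i l)
      _ = ∑ l, (Q ^ k) i l := by simp
  -- a single power with all row sums < 1
  choose kk hkk using hexists
  set n : ℕ := ∑ i, kk i with hn
  have hlt : ∀ i : Fin N, ∑ j, (Q ^ n) i j < 1 := by
    intro i
    have hle : kk i ≤ n :=
      Finset.single_le_sum (f := kk) (fun j _ => Nat.zero_le _) (Finset.mem_univ i)
    have : n = kk i + (n - kk i) := (Nat.add_sub_cancel' hle).symm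
    rw [this]
    exact lt_of_le_of_lt (hmono (kk i) (n - kk i) i) (hkk i)
  -- kernel of (1 - Q) is trivial
  rw [isUnit_iff_ne_zero]
  intro hdet
  obtain ⟨v, hv, hv0⟩ := (Matrix.exists_mulVec_eq_zero_iff).2 hdet
  have hQv : Q *ᵥ v = v := by
    have := hv0
    rw [Matrix.sub_mulVec, Matrix.one_mulVec, sub_eq_zero] at this
    exact this.symm
  have hQnv : ∀ m, (Q ^ m) *ᵥ v = v := by
    intro m
    induction m with
    | zero => simp
    | succ m ih =>
      rw [pow_succ, ← Matrix.mulVec_mulVec, hQv, ih]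
  obtain ⟨j₀, hj₀⟩ : ∃ j, v j ≠ 0 := Function.ne_iff.1 hv
  have hne : (Finset.univ : Finset (Fin N)).Nonempty := ⟨j₀, Finset.mem_univ j₀⟩
  obtain ⟨i₀, -, hi₀⟩ := Finset.exists_max_image Finset.univ (fun j => |v j|) hne
  have hpos : 0 < |v i₀| := lt_of_lt_of_le (abs_pos.2 hj₀) (hi₀ j₀ (Finset.mem_univ j₀))
  have hbound : |v i₀| ≤ (∑ j, (Q ^ n) i₀ j) * |v i₀| := by
    conv_lhs => rw [← hQnv n]
    rw [Matrix.mulVec, dotProduct]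
    calc |∑ j, (Q ^ n) i₀ j * v j| ≤ ∑ j, |(Q ^ n) i₀ j * v j| :=
          Finset.abs_sum_le_sum_abs _ _
      _ = ∑ j, (Q ^ n) i₀ j * |v j| := by
          refine Finset.sum_congr rfl fun j _ => ?_
          rw [abs_mul, abs_of_nonneg (hQpow n i₀ j)]
      _ ≤ ∑ j, (Q ^ n) i₀ j * |v i₀| :=
          Finset.sum_le_sum fun j _ =>
            mul_le_mul_of_nonneg_left (hi₀ j (Finset.mem_univ j)) (hQpow n i₀ j)
      _ = (∑ j, (Q ^ n) i₀ j) * |v i₀| := by rw [Finset.sum_mul]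
  nlinarith [hlt i₀]

/-- second-moment recursion for the reward `R` accumulated until the Markov chain
first hits the base state `0`:
`E_{S∖{0}}(R²) = (I - P̃)⁻¹ ( E(ρ̃^{∘2}) + 2 diag(E(ρ̃)) P̃ E_{S∖{0}}(R) )`.
Setup as in the first-moment recursion: `β i` is the law of the one-step reward `ρ(i)` in
state `i`, `ν i` is the law of `R` given `J₁ = i`, and `hfix` is the first-step (Markov)
distributional decomposition of `R`. -/
theorem second_moment_reward_until_base (N : ℕ)
    (P : Matrix (Fin (N + 1)) (Fin (N + 1)) ℝ)
    (hnonneg : ∀ i j, 0 ≤ P i j)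
    (hrow : ∀ i, ∑ j, P i j = 1)
    (hdiag : ∀ i, P i i = 0)
    (hirred : ∀ i j, ∃ k : ℕ, 0 < (P ^ k) i j)
    (β : Fin (N + 1) → Measure ℝ) (hβ : ∀ i, IsProbabilityMeasure (β i))
    (ν : Fin (N + 1) → Measure ℝ) (hν : ∀ i, IsProbabilityMeasure (ν i))
    (hβint : ∀ i, Integrable (fun x => x) (β i))
    (hνint : ∀ i, Integrable (fun x => x) (ν i))
    (hβint2 : ∀ i, Integrable (fun x => x ^ 2) (β i))
    (hνint2 : ∀ i, Integrable (fun x => x ^ 2) (ν i))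
    (hfix : ∀ i : Fin N, ν i.succ =
      (β i.succ).conv ((ENNReal.ofReal (P i.succ 0)) • Measure.dirac (0 : ℝ) +
        ∑ j : Fin N, (ENNReal.ofReal (P i.succ j.succ)) • ν j.succ)) :
    (fun i : Fin N => ∫ x, x ^ 2 ∂(ν i.succ)) =
      ((1 : Matrix (Fin N) (Fin N) ℝ) - Matrix.of fun i j : Fin N => P i.succ j.succ)⁻¹ *ᵥ
        ((fun i : Fin N => ∫ x, x ^ 2 ∂(β i.succ)) +
          (2 : ℝ) • (((Matrix.diagonal fun i : Fin N => ∫ x, x ∂(β i.succ)) *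
              Matrix.of fun i j : Fin N => P i.succ j.succ) *ᵥ
            fun i : Fin N => ∫ x, x ∂(ν i.succ))) := by
  set Q : Matrix (Fin N) (Fin N) ℝ := Matrix.of fun i j : Fin N => P i.succ j.succ with hQdef
  set b : Fin N → ℝ := fun i => ∫ x, x ∂(β i.succ) with hbdef
  set b2 : Fin N → ℝ := fun i => ∫ x, x ^ 2 ∂(β i.succ) with hb2def
  set μv : Fin N → ℝ := fun i => ∫ x, x ∂(ν i.succ) with hμvdef
  set m2 : Fin N → ℝ := fun i => ∫ x, x ^ 2 ∂(ν i.succ) with hm2def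
  -- the mixing measure appearing in hfix
  set η : Fin N → Measure ℝ := fun i =>
    (ENNReal.ofReal (P i.succ 0)) • Measure.dirac (0 : ℝ) +
      ∑ j : Fin N, (ENNReal.ofReal (P i.succ j.succ)) • ν j.succ with hηdef
  -- splitting of the row sum of P
  have hrowsplit : ∀ i : Fin N, P i.succ 0 + ∑ j : Fin N, P i.succ j.succ = 1 := by
    intro i
    rw [← Fin.sum_univ_succ]
    exact hrow i.succ
  -- η i is a probability measure
  have hηprob : ∀ i : Fin N, IsProbabilityMeasure (η i) := by
    intro i
    constructor
    simp only [hηdef, Measure.coe_add, Measure.coe_smul, Pi.add_apply, Pi.smul_apply,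
      Measure.coe_finset_sum, Finset.sum_apply, smul_eq_mul]
    have h1 : (Measure.dirac (0 : ℝ)) Set.univ = 1 := measure_univ
    have h2 : ∀ j : Fin N, ENNReal.ofReal (P i.succ j.succ) * (ν j.succ) Set.univ
        = ENNReal.ofReal (P i.succ j.succ) := by
      intro j; haveI := hν j.succ; rw [measure_univ, mul_one]
    rw [h1, mul_one, Finset.sum_congr rfl fun j _ => h2 j,
      ← ENNReal.ofReal_sum_of_nonneg fun j _ => hnonneg i.succ j.succ,
      ← ENNReal.ofReal_add (hnonneg i.succ 0)
        (Finset.sum_nonneg fun j _ => hnonneg i.succ j.succ),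
      hrowsplit i, ENNReal.ofReal_one]
  -- integrability of x and x² with respect to the dirac measure at 0
  have hdirac1 : Integrable (fun x : ℝ => x) (Measure.dirac (0 : ℝ)) := by
    refine ⟨aestronglyMeasurable_id, ?_⟩
    simp [HasFiniteIntegral, lintegral_dirac]
  have hdirac2 : Integrable (fun x : ℝ => x ^ 2) (Measure.dirac (0 : ℝ)) := by
    refine ⟨by fun_prop, ?_⟩
    simp [HasFiniteIntegral, lintegral_dirac]
  -- integrability with respect to η i
  have hηint1 : ∀ i : Fin N, Integrable (fun x : ℝ => x) (η i) := fun i =>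
    (hdirac1.smul_measure ENNReal.ofReal_ne_top).add_measure
      (integrable_finset_sum_measure.2 fun j _ =>
        (hνint j.succ).smul_measure ENNReal.ofReal_ne_top)
  have hηint2 : ∀ i : Fin N, Integrable (fun x : ℝ => x ^ 2) (η i) := fun i =>
    (hdirac2.smul_measure ENNReal.ofReal_ne_top).add_measure
      (integrable_finset_sum_measure.2 fun j _ =>
        (hνint2 j.succ).smul_measure ENNReal.ofReal_ne_top)
  -- first and second moments of η i
  have htoReal : ∀ i j : Fin (N + 1), (ENNReal.ofReal (P i j)).toReal = P i j := fun i j =>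
    ENNReal.toReal_ofReal (hnonneg i j)
  have hηmom1 : ∀ i : Fin N, ∫ x, x ∂(η i) = ∑ j, Q i j * μv j := by
    intro i
    rw [hηdef]
    rw [integral_add_measure ((hdirac1).smul_measure ENNReal.ofReal_ne_top)
      (integrable_finset_sum_measure.2 fun j _ =>
        (hνint j.succ).smul_measure ENNReal.ofReal_ne_top),
      integral_smul_measure, integral_dirac,
      integral_finset_sum_measure fun j _ =>
        (hνint j.succ).smul_measure ENNReal.ofReal_ne_top]
    simp only [integral_smul_measure, htoReal, smul_eq_mul, mul_zero, zero_add]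
    rfl
  have hηmom2 : ∀ i : Fin N, ∫ x, x ^ 2 ∂(η i) = ∑ j, Q i j * m2 j := by
    intro i
    rw [hηdef]
    rw [integral_add_measure ((hdirac2).smul_measure ENNReal.ofReal_ne_top)
      (integrable_finset_sum_measure.2 fun j _ =>
        (hνint2 j.succ).smul_measure ENNReal.ofReal_ne_top),
      integral_smul_measure, integral_dirac,
      integral_finset_sum_measure fun j _ =>
        (hνint2 j.succ).smul_measure ENNReal.ofReal_ne_top]
    rw [show (0:ℝ) ^ 2 = 0 by norm_num]
    simp only [integral_smul_measure, htoReal, smul_eq_mul, mul_zero, zero_add]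
    rfl
  -- the per-coordinate second-moment identity
  have hkey : ∀ i : Fin N,
      m2 i = b2 i + 2 * b i * (∑ j, Q i j * μv j) + ∑ j, Q i j * m2 j := by
    intro i
    haveI := hβ i.succ
    haveI := hηprob i
    have hconv : m2 i = ∫ x, x ^ 2 ∂((β i.succ).conv (η i)) := by
      rw [hm2def]
      simp only
      rw [hfix i]
    rw [hconv, conv_sq_moment (β i.succ) (η i) (hβint i.succ) (hηint1 i)
      (hβint2 i.succ) (hηint2 i), hηmom1 i, hηmom2 i]
  -- the matrix form of the identity
  have hmat : ((1 : Matrix (Fin N) (Fin N) ℝ) - Q) *ᵥ m2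
      = b2 + (2 : ℝ) • ((Matrix.diagonal b * Q) *ᵥ μv) := by
    funext i
    have hLHS : ((((1 : Matrix (Fin N) (Fin N) ℝ) - Q)) *ᵥ m2) i
        = m2 i - ∑ j, Q i j * m2 j := by
      rw [Matrix.sub_mulVec, Matrix.one_mulVec]
      simp [Matrix.mulVec, dotProduct, Finset.sum_sub_distrib]
    have hRHS : (b2 + (2 : ℝ) • ((Matrix.diagonal b * Q) *ᵥ μv)) i
        = b2 i + 2 * ∑ j, b i * Q i j * μv j := by
      simp [Matrix.mulVec, dotProduct, Matrix.diagonal_mul]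
    rw [hLHS, hRHS]
    have hsum : (2 : ℝ) * (∑ j, b i * Q i j * μv j) = 2 * b i * (∑ j, Q i j * μv j) := by
      rw [Finset.mul_sum, Finset.mul_sum]
      exact Finset.sum_congr rfl fun j _ => by ring
    have h := hkey i
    linarith [h, hsum]
  -- invertibility of 1 - Q
  have hunit : IsUnit ((1 : Matrix (Fin N) (Fin N) ℝ) - Q).det := by
    rw [hQdef]
    exact det_one_sub_sub_ne_zero N P hnonneg hrow hirred
  calc m2 = ((1 : Matrix (Fin N) (Fin N) ℝ) - Q)⁻¹ *ᵥ
        (((1 : Matrix (Fin N) (Fin N) ℝ) - Q) *ᵥ m2) := by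
        rw [Matrix.mulVec_mulVec, Matrix.nonsing_inv_mul _ hunit, Matrix.one_mulVec]
    _ = _ := by rw [hmat]
end

section
/- Under the hypotheses of the reward recursion lemma, for every n ≥ 2 the vector of n-th moments satisfies E_{S\{0}}(R^n) = (I - P̃)^{-1} ( E(ρ̃^{∘n}) + Σ_{m=1}^{n-1} C(n,m) diag(E(ρ̃^{∘(n-m)})) P̃ E_{S\{0}}(R^m) ), where C(n,m) denotes the binomial coefficient and ρ̃^{∘k} the Hadamard k-th power. -/
open MeasureTheory Matrix

/-- Moments of an additive convolution via the binomial theorem. -/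
lemma integral_pow_conv_aux (μ ν : Measure ℝ) [IsFiniteMeasure μ] [IsFiniteMeasure ν] (n : ℕ)
    (hμ : ∀ k ≤ n, Integrable (fun x => x ^ k) μ)
    (hν : ∀ k ≤ n, Integrable (fun x => x ^ k) ν) :
    ∫ x, x ^ n ∂(μ.conv ν) =
      ∑ k ∈ Finset.range (n + 1),
        (n.choose k : ℝ) * ((∫ x, x ^ k ∂μ) * (∫ x, x ^ (n - k) ∂ν)) := by
  unfold Measure.conv
  rw [integral_map (by fun_prop) (by fun_prop)]
  have hp : ∀ p : ℝ × ℝ, (p.1 + p.2) ^ n =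
      ∑ k ∈ Finset.range (n + 1), (n.choose k : ℝ) * (p.1 ^ k * p.2 ^ (n - k)) := by
    intro p
    rw [add_pow]
    exact Finset.sum_congr rfl fun k _ => by ring
  simp_rw [hp]
  rw [integral_finset_sum]
  · refine Finset.sum_congr rfl fun k hk => ?_
    rw [integral_const_mul]
    exact congrArg _ (integral_prod_mul (fun x : ℝ => x ^ k) (fun x : ℝ => x ^ (n - k)))
  · intro k hk
    rw [Finset.mem_range] at hk
    exact (((hμ k (by omega)).mul_prod (hν (n - k) (by omega)))).const_mul _

/-- Integral against a finite mixture of a Dirac at `0` and measures `ν j`. -/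
lemma integral_mixture_aux {N : ℕ} (c0 : ℝ) (c : Fin N → ℝ) (hc0 : 0 ≤ c0) (hc : ∀ j, 0 ≤ c j)
    (ν : Fin N → Measure ℝ) (f : ℝ → ℝ) (hf : ∀ j, Integrable f (ν j))
    (hfm : StronglyMeasurable f) :
    ∫ x, f x ∂((ENNReal.ofReal c0) • Measure.dirac (0 : ℝ) +
        ∑ j, (ENNReal.ofReal (c j)) • ν j) =
      c0 * f 0 + ∑ j, c j * ∫ x, f x ∂(ν j) := by
  have hd : Integrable f (Measure.dirac (0 : ℝ)) := by
    refine ⟨hfm.aestronglyMeasurable, ?_⟩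
    simp [HasFiniteIntegral, lintegral_dirac]
  have h1 : Integrable f ((ENNReal.ofReal c0) • Measure.dirac (0 : ℝ)) :=
    hd.smul_measure ENNReal.ofReal_ne_top
  have h2 : Integrable f (∑ j, (ENNReal.ofReal (c j)) • ν j) := by
    refine integrable_finset_sum_measure.2 fun j _ => ?_
    exact (hf j).smul_measure ENNReal.ofReal_ne_top
  rw [integral_add_measure h1 h2, integral_smul_measure, integral_dirac,
    integral_finset_sum_measure fun j _ => (hf j).smul_measure ENNReal.ofReal_ne_top]
  simp_rw [integral_smul_measure]
  rw [ENNReal.toReal_ofReal hc0]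
  congr 1
  refine Finset.sum_congr rfl fun j _ => ?_
  rw [ENNReal.toReal_ofReal (hc j), smul_eq_mul]

/-- The substochastic submatrix `P̃` obtained by deleting the row and column of the base state `0`
of an irreducible stochastic matrix satisfies: `1 - P̃` is invertible. -/
lemma isUnit_one_sub_sub_aux {N : ℕ} (P : Matrix (Fin (N + 1)) (Fin (N + 1)) ℝ)
    (hnonneg : ∀ i j, 0 ≤ P i j)
    (hrow : ∀ i, ∑ j, P i j = 1)
    (hirred : ∀ i j, ∃ k : ℕ, 0 < (P ^ k) i j) :
    IsUnit ((1 : Matrix (Fin N) (Fin N) ℝ) -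
      Matrix.of fun i j : Fin N => P i.succ j.succ) := by
  set Q : Matrix (Fin N) (Fin N) ℝ := Matrix.of fun i j : Fin N => P i.succ j.succ with hQ
  -- entrywise nonnegativity of powers of P and Q
  have hPk : ∀ k : ℕ, ∀ i j, 0 ≤ (P ^ k) i j := by
    intro k
    induction k with
    | zero => intro i j; rw [pow_zero]; by_cases h : i = j <;> simp [Matrix.one_apply, h]
    | succ k ih =>
      intro i j
      rw [pow_succ, Matrix.mul_apply]
      exact Finset.sum_nonneg fun l _ => mul_nonneg (ih i l) (hnonneg l j)
  have hQk : ∀ k : ℕ, ∀ i j, 0 ≤ (Q ^ k) i j := by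
    intro k
    induction k with
    | zero => intro i j; rw [pow_zero]; by_cases h : i = j <;> simp [Matrix.one_apply, h]
    | succ k ih =>
      intro i j
      rw [pow_succ, Matrix.mul_apply]
      exact Finset.sum_nonneg fun l _ => mul_nonneg (ih i l) (hnonneg l.succ j.succ)
  -- powers of Q are dominated by powers of P
  have hle : ∀ k : ℕ, ∀ i j : Fin N, (Q ^ k) i j ≤ (P ^ k) i.succ j.succ := by
    intro k
    induction k with
    | zero =>
      intro i j
      rw [pow_zero, pow_zero]
      by_cases h : i = j
      · simp [Matrix.one_apply, h]
      · simp [Matrix.one_apply, h, fun hc => h (Fin.succ_inj.1 hc)]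
    | succ k ih =>
      intro i j
      rw [pow_succ, pow_succ, Matrix.mul_apply, Matrix.mul_apply]
      calc ∑ l : Fin N, (Q ^ k) i l * Q l j
          ≤ ∑ l : Fin N, (P ^ k) i.succ l.succ * P l.succ j.succ := by
            refine Finset.sum_le_sum fun l _ => ?_
            exact mul_le_mul (ih i l) le_rfl (hnonneg l.succ j.succ) (hPk k i.succ l.succ)
        _ ≤ ∑ l : Fin (N + 1), (P ^ k) i.succ l * P l j.succ := by
            rw [Fin.sum_univ_succ]
            have : 0 ≤ (P ^ k) i.succ 0 * P 0 j.succ :=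
              mul_nonneg (hPk k i.succ 0) (hnonneg 0 j.succ)
            linarith
  -- row sums of powers of P equal 1
  have hProw : ∀ k : ℕ, ∀ i, ∑ j, (P ^ k) i j = 1 := by
    intro k
    induction k with
    | zero => intro i; simp [pow_zero, Matrix.one_apply]
    | succ k ih =>
      intro i
      simp_rw [pow_succ, Matrix.mul_apply]
      rw [Finset.sum_comm]
      simp_rw [← Finset.mul_sum, hrow, mul_one]
      exact ih i
  -- injectivity of mulVec
  have hinj : Function.Injective ((1 - Q).mulVec) := by
    intro v w hvw
    have hz : (1 - Q) *ᵥ (v - w) = 0 := by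
      rw [Matrix.mulVec_sub, hvw, sub_self]
    set z := v - w with hzdef
    suffices hz0 : z = 0 by
      have h' : v - w = 0 := hz0
      exact sub_eq_zero.1 h'
    -- z = Q *ᵥ z
    have hfix : z = Q *ᵥ z := by
      have := hz
      rw [Matrix.sub_mulVec, Matrix.one_mulVec, sub_eq_zero] at this
      exact this
    by_cases hN : N = 0
    · subst hN; funext i; exact i.elim0
    have hne : (Finset.univ : Finset (Fin N)).Nonempty := by
      refine Finset.univ_nonempty_iff.2 ?_
      exact Fin.pos_iff_nonempty.1 (Nat.pos_of_ne_zero hN)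
    set u : Fin N → ℝ := fun i => |z i| with hu
    -- u ≤ Q^k *ᵥ u pointwise
    have hstep : ∀ i, u i ≤ (Q *ᵥ u) i := by
      intro i
      have : z i = ∑ j, Q i j * z j := by
        conv_lhs => rw [hfix]
        rfl
      calc u i = |∑ j, Q i j * z j| := by rw [hu]; simp only [this]
        _ ≤ ∑ j, |Q i j * z j| := Finset.abs_sum_le_sum_abs _ _
        _ = ∑ j, Q i j * u j := by
            refine Finset.sum_congr rfl fun j _ => ?_
            rw [abs_mul, abs_of_nonneg (show (0:ℝ) ≤ Q i j from hnonneg i.succ j.succ)]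
        _ = (Q *ᵥ u) i := rfl
    have hiter : ∀ k : ℕ, ∀ i, u i ≤ ((Q ^ k) *ᵥ u) i := by
      intro k
      induction k with
      | zero => intro i; simp [Matrix.one_mulVec]
      | succ k ih =>
        intro i
        calc u i ≤ ((Q ^ k) *ᵥ u) i := ih i
          _ ≤ ((Q ^ k) *ᵥ (Q *ᵥ u)) i := by
              show ∑ j, (Q ^ k) i j * u j ≤ ∑ j, (Q ^ k) i j * (Q *ᵥ u) j
              refine Finset.sum_le_sum fun j _ => ?_
              exact mul_le_mul_of_nonneg_left (hstep j) (hQk k i j)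
          _ = ((Q ^ (k + 1)) *ᵥ u) i := by
              rw [Matrix.mulVec_mulVec, ← pow_succ]
    -- maximum principle
    obtain ⟨i, -, hi⟩ := Finset.exists_max_image Finset.univ u hne
    have hiM : ∀ j, u j ≤ u i := fun j => hi j (Finset.mem_univ j)
    have hM0 : 0 ≤ u i := abs_nonneg _
    rcases eq_or_lt_of_le hM0 with hM | hM
    · funext j
      have : |z j| ≤ 0 := le_of_le_of_eq (hiM j) hM.symm
      have := le_antisymm this (abs_nonneg _)
      simpa using abs_eq_zero.1 this
    · exfalso
      obtain ⟨k, hk⟩ := hirred i.succ 0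
      have hrowQk : ∑ j : Fin N, (Q ^ k) i j < 1 := by
        calc ∑ j : Fin N, (Q ^ k) i j
            ≤ ∑ j : Fin N, (P ^ k) i.succ j.succ :=
              Finset.sum_le_sum fun j _ => hle k i j
          _ = 1 - (P ^ k) i.succ 0 := by
              have := hProw k i.succ
              rw [Fin.sum_univ_succ] at this
              linarith
          _ < 1 := by linarith
      have : u i ≤ (∑ j : Fin N, (Q ^ k) i j) * u i := by
        calc u i ≤ ((Q ^ k) *ᵥ u) i := hiter k i
          _ = ∑ j, (Q ^ k) i j * u j := rfl
          _ ≤ ∑ j, (Q ^ k) i j * u i :=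
              Finset.sum_le_sum fun j _ =>
                mul_le_mul_of_nonneg_left (hiM j) (hQk k i j)
          _ = (∑ j : Fin N, (Q ^ k) i j) * u i := by rw [Finset.sum_mul]
      nlinarith
  exact Matrix.mulVec_injective_iff_isUnit.1 hinj

/-- `n`-th moment recursion (`n ≥ 2`) for the reward `R` accumulated until the
Markov chain first hits the base state `0`:
`E_{S∖{0}}(Rⁿ) = (I-P̃)⁻¹ ( E(ρ̃^{∘n}) + Σ_{m=1}^{n-1} C(n,m) diag(E(ρ̃^{∘(n-m)})) P̃ E_{S∖{0}}(Rᵐ) )`.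
Setup as in the first-moment recursion, with all moments up to order `n` finite. -/
theorem nth_moment_reward_until_base (N : ℕ) (n : ℕ) (hn : 2 ≤ n)
    (P : Matrix (Fin (N + 1)) (Fin (N + 1)) ℝ)
    (hnonneg : ∀ i j, 0 ≤ P i j)
    (hrow : ∀ i, ∑ j, P i j = 1)
    (hdiag : ∀ i, P i i = 0)
    (hirred : ∀ i j, ∃ k : ℕ, 0 < (P ^ k) i j)
    (β : Fin (N + 1) → Measure ℝ) (hβ : ∀ i, IsProbabilityMeasure (β i))
    (ν : Fin (N + 1) → Measure ℝ) (hν : ∀ i, IsProbabilityMeasure (ν i))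
    (hβint : ∀ i, ∀ k ≤ n, Integrable (fun x => x ^ k) (β i))
    (hνint : ∀ i, ∀ k ≤ n, Integrable (fun x => x ^ k) (ν i))
    (hfix : ∀ i : Fin N, ν i.succ =
      (β i.succ).conv ((ENNReal.ofReal (P i.succ 0)) • Measure.dirac (0 : ℝ) +
        ∑ j : Fin N, (ENNReal.ofReal (P i.succ j.succ)) • ν j.succ)) :
    (fun i : Fin N => ∫ x, x ^ n ∂(ν i.succ)) =
      ((1 : Matrix (Fin N) (Fin N) ℝ) - Matrix.of fun i j : Fin N => P i.succ j.succ)⁻¹ *ᵥ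
        ((fun i : Fin N => ∫ x, x ^ n ∂(β i.succ)) +
          ∑ m ∈ Finset.Ico 1 n, (n.choose m : ℝ) •
            (((Matrix.diagonal fun i : Fin N => ∫ x, x ^ (n - m) ∂(β i.succ)) *
                Matrix.of fun i j : Fin N => P i.succ j.succ) *ᵥ
              fun i : Fin N => ∫ x, x ^ m ∂(ν i.succ))) := by
  classical
  set Q : Matrix (Fin N) (Fin N) ℝ := Matrix.of fun i j : Fin N => P i.succ j.succ with hQdef
  set μmix : Fin N → Measure ℝ := fun i =>
    (ENNReal.ofReal (P i.succ 0)) • Measure.dirac (0 : ℝ) +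
      ∑ j : Fin N, (ENNReal.ofReal (P i.succ j.succ)) • ν j.succ with hμmix
  have hfix' : ∀ i : Fin N, ν i.succ = (β i.succ).conv (μmix i) := fun i => hfix i
  -- the mixture is a probability measure
  have hprob : ∀ i : Fin N, IsProbabilityMeasure (μmix i) := by
    intro i
    constructor
    have hd : (Measure.dirac (0 : ℝ)) Set.univ = 1 := measure_univ
    have hνu : ∀ j : Fin N, (ν j.succ) Set.univ = 1 := fun j => (hν j.succ).measure_univ
    have : μmix i Set.univ = ENNReal.ofReal (P i.succ 0) * (Measure.dirac (0 : ℝ)) Set.univ +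
        ∑ j : Fin N, ENNReal.ofReal (P i.succ j.succ) * (ν j.succ) Set.univ := by
      simp [hμmix, Measure.finset_sum_apply]
    rw [this, hd, mul_one]
    simp_rw [hνu, mul_one]
    rw [← ENNReal.ofReal_sum_of_nonneg (fun j _ => hnonneg i.succ j.succ),
      ← ENNReal.ofReal_add (hnonneg i.succ 0) (Finset.sum_nonneg fun j _ => hnonneg i.succ j.succ)]
    have h1 := hrow i.succ
    rw [Fin.sum_univ_succ] at h1
    rw [h1, ENNReal.ofReal_one]
  -- integrability of moments w.r.t. the mixture
  have hmixint : ∀ i : Fin N, ∀ k, k ≤ n → Integrable (fun x => x ^ k) (μmix i) := by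
    intro i k hk
    refine Integrable.add_measure ?_ ?_
    · refine Integrable.smul_measure ?_ ENNReal.ofReal_ne_top
      refine ⟨((continuous_pow k).stronglyMeasurable).aestronglyMeasurable, ?_⟩
      simp only [HasFiniteIntegral, lintegral_dirac]
      exact ENNReal.coe_lt_top
    · exact integrable_finset_sum_measure.2 fun j _ =>
        (hνint j.succ k hk).smul_measure ENNReal.ofReal_ne_top
  -- moments of the mixture
  have hmixmom : ∀ i : Fin N, ∀ k, k ≤ n → ∫ x, x ^ k ∂(μmix i) =
      P i.succ 0 * (0 : ℝ) ^ k + ∑ j : Fin N, P i.succ j.succ * ∫ x, x ^ k ∂(ν j.succ) := by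
    intro i k hk
    exact integral_mixture_aux (P i.succ 0) (fun j => P i.succ j.succ) (hnonneg i.succ 0)
      (fun j => hnonneg i.succ j.succ) (fun j => ν j.succ) (fun x => x ^ k)
      (fun j => hνint j.succ k hk) ((continuous_pow k).stronglyMeasurable)
  have hν0 : ∀ j : Fin N, ∫ x, x ^ (0 : ℕ) ∂(ν j.succ) = 1 := by
    intro j; haveI := hν j.succ; simp
  have hβ0 : ∀ i : Fin N, ∫ x, x ^ (0 : ℕ) ∂(β i.succ) = 1 := by
    intro i; haveI := hβ i.succ; simp
  -- mixture moments
  have hmix0 : ∀ i : Fin N, ∫ x, x ^ (0 : ℕ) ∂(μmix i) = 1 := by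
    intro i
    rw [hmixmom i 0 (by omega)]
    simp_rw [hν0, pow_zero, mul_one]
    have h1 := hrow i.succ
    rw [Fin.sum_univ_succ] at h1
    linarith
  have hmixpos : ∀ i : Fin N, ∀ k, 1 ≤ k → k ≤ n → ∫ x, x ^ k ∂(μmix i) =
      ∑ j : Fin N, P i.succ j.succ * ∫ x, x ^ k ∂(ν j.succ) := by
    intro i k h1 h2
    rw [hmixmom i k h2, zero_pow (by omega : k ≠ 0), mul_zero, zero_add]
  -- the key componentwise recursion
  have hkey : ∀ i : Fin N, ∫ x, x ^ n ∂(ν i.succ) =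
      (∫ x, x ^ n ∂(β i.succ)) +
        (∑ m ∈ Finset.Ico 1 n, (n.choose m : ℝ) *
          ((∫ x, x ^ (n - m) ∂(β i.succ)) *
            (∑ j : Fin N, P i.succ j.succ * ∫ x, x ^ m ∂(ν j.succ)))) +
        ∑ j : Fin N, P i.succ j.succ * ∫ x, x ^ n ∂(ν j.succ) := by
    intro i
    haveI := hβ i.succ
    haveI := hprob i
    have hint : ∫ x, x ^ n ∂(ν i.succ) =
        ∑ k ∈ Finset.range (n + 1), (n.choose k : ℝ) *
          ((∫ x, x ^ k ∂(β i.succ)) * (∫ x, x ^ (n - k) ∂(μmix i))) := by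
      conv_lhs => rw [hfix' i]
      exact integral_pow_conv_aux _ _ n (fun k hk => hβint i.succ k hk) (fun k hk => hmixint i k hk)
    rw [Finset.sum_range_succ, Finset.range_eq_Ico,
      Finset.sum_eq_sum_Ico_succ_bot (by omega : 0 < n)] at hint
    rw [hint]
    -- identify the three pieces
    have hF0 : (n.choose 0 : ℝ) * ((∫ x, x ^ (0:ℕ) ∂(β i.succ)) * (∫ x, x ^ (n - 0) ∂(μmix i))) =
        ∑ j : Fin N, P i.succ j.succ * ∫ x, x ^ n ∂(ν j.succ) := by
      rw [Nat.choose_zero_right, hβ0 i, Nat.sub_zero, hmixpos i n (by omega) le_rfl]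
      ring
    have hFn : (n.choose n : ℝ) * ((∫ x, x ^ n ∂(β i.succ)) * (∫ x, x ^ (n - n) ∂(μmix i))) =
        ∫ x, x ^ n ∂(β i.succ) := by
      rw [Nat.choose_self, Nat.sub_self, hmix0 i]
      ring
    have hmid : ∑ k ∈ Finset.Ico 1 n, (n.choose k : ℝ) *
          ((∫ x, x ^ k ∂(β i.succ)) * (∫ x, x ^ (n - k) ∂(μmix i))) =
        ∑ m ∈ Finset.Ico 1 n, (n.choose m : ℝ) *
          ((∫ x, x ^ (n - m) ∂(β i.succ)) *
            (∑ j : Fin N, P i.succ j.succ * ∫ x, x ^ m ∂(ν j.succ))) := by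
      refine Finset.sum_nbij' (fun k => n - k) (fun m => n - m) ?_ ?_ ?_ ?_ ?_
      · intro k hk; simp only [Finset.mem_Ico] at hk ⊢; omega
      · intro m hm; simp only [Finset.mem_Ico] at hm ⊢; omega
      · intro k hk; simp only [Finset.mem_Ico] at hk; show n - (n - k) = k; omega
      · intro m hm; simp only [Finset.mem_Ico] at hm; show n - (n - m) = m; omega
      · intro k hk
        simp only [Finset.mem_Ico] at hk
        have h1 : n - (n - k) = k := by omega
        rw [h1, Nat.choose_symm (by omega : k ≤ n),
          hmixpos i (n - k) (by omega) (by omega)]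
    rw [hF0, hFn, hmid]
    ring
  -- assemble via the invertible matrix
  have hA : IsUnit ((1 : Matrix (Fin N) (Fin N) ℝ) - Q) :=
    isUnit_one_sub_sub_aux P hnonneg hrow hirred
  have hAdet : IsUnit ((1 : Matrix (Fin N) (Fin N) ℝ) - Q).det :=
    (Matrix.isUnit_iff_isUnit_det _).1 hA
  have heq : ((1 : Matrix (Fin N) (Fin N) ℝ) - Q) *ᵥ (fun i : Fin N => ∫ x, x ^ n ∂(ν i.succ)) =
      ((fun i : Fin N => ∫ x, x ^ n ∂(β i.succ)) +
        ∑ m ∈ Finset.Ico 1 n, (n.choose m : ℝ) •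
          (((Matrix.diagonal fun i : Fin N => ∫ x, x ^ (n - m) ∂(β i.succ)) * Q) *ᵥ
            fun i : Fin N => ∫ x, x ^ m ∂(ν i.succ))) := by
    funext i
    have h1 : (Q *ᵥ fun j : Fin N => ∫ x, x ^ n ∂(ν j.succ)) i =
        ∑ j : Fin N, P i.succ j.succ * ∫ x, x ^ n ∂(ν j.succ) := by
      simp [Matrix.mulVec, dotProduct, hQdef]
    have h2 : ∀ m : ℕ,
        (((Matrix.diagonal fun i : Fin N => ∫ x, x ^ (n - m) ∂(β i.succ)) * Q) *ᵥ
          fun j : Fin N => ∫ x, x ^ m ∂(ν j.succ)) i =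
        (∫ x, x ^ (n - m) ∂(β i.succ)) *
          ∑ j : Fin N, P i.succ j.succ * ∫ x, x ^ m ∂(ν j.succ) := by
      intro m
      simp [Matrix.mulVec, dotProduct, Matrix.diagonal_mul, hQdef,
        Finset.mul_sum, mul_assoc]
    simp only [Matrix.sub_mulVec, Pi.sub_apply, Matrix.one_mulVec, Pi.add_apply,
      Finset.sum_apply, Pi.smul_apply, smul_eq_mul]
    rw [h1]
    have h3 : ∑ m ∈ Finset.Ico 1 n, (n.choose m : ℝ) *
          ((((Matrix.diagonal fun i : Fin N => ∫ x, x ^ (n - m) ∂(β i.succ)) * Q) *ᵥ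
            fun j : Fin N => ∫ x, x ^ m ∂(ν j.succ)) i) =
        ∑ m ∈ Finset.Ico 1 n, (n.choose m : ℝ) *
          ((∫ x, x ^ (n - m) ∂(β i.succ)) *
            (∑ j : Fin N, P i.succ j.succ * ∫ x, x ^ m ∂(ν j.succ))) :=
      Finset.sum_congr rfl fun m _ => by rw [h2 m]
    rw [h3]
    linarith [hkey i]
  rw [← heq, Matrix.mulVec_mulVec, Matrix.nonsing_inv_mul _ hAdet, Matrix.one_mulVec]
end

section
/- In the 2-state model, the effective diffusivity D_eff := (1/(2E(ΔT)))( Var(ΔX) + v_eff² Var(ΔT) − 2 v_eff Cov(ΔX, ΔT) ) equals D β₁/(β₁+β₂) + v² β₁ β₂/(β₁+β₂)³, where v_eff = v β₂/(β₁+β₂). -/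
/-!
Write `c = v β₂/(β₁+β₂)`. The bracket is `Var(ΔX − c ΔT)`, and
`ΔX − c ΔT = √(2D τ(0)) Z + (−c τ(0) + (v − c) τ(1))`. Since `Z` is centred and independent of
`(τ(0), τ(1))`, the two summands are uncorrelated and the first one has second moment
`2D E τ(0) E Z² = 2D/β₂`; the second is a combination of independent exponential times, with
variance `c²/β₂² + (v − c)²/β₁²`. Dividing by `2 E ΔT = 2(β₁+β₂)/(β₁β₂)` gives the formula.
-/

open MeasureTheory ProbabilityTheory

/-- Covariance of two real random variables. -/
noncomputable def cov {Ω : Type*} [MeasurableSpace Ω] (f g : Ω → ℝ)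
    (μ : MeasureTheory.Measure Ω) : ℝ :=
  (∫ ω, f ω * g ω ∂μ) - (∫ ω, f ω ∂μ) * ∫ ω, g ω ∂μ

open Real Set

lemma measurable_gammaPDF (a r : ℝ) : Measurable (gammaPDF a r) :=
  (measurable_gammaPDFReal a r).ennreal_ofReal

lemma ae_nonneg_gammaMeasure (a r : ℝ) : ∀ᵐ x ∂gammaMeasure a r, 0 ≤ x := by
  rw [gammaMeasure, ae_withDensity_iff (measurable_gammaPDF a r)]
  exact ae_of_all _ fun x hx ↦ not_lt.mp fun h ↦ hx (gammaPDF_of_neg h)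

lemma integral_gammaMeasure_eq_setIntegral {a r : ℝ} (ha : 0 < a) (hr : 0 < r) (f : ℝ → ℝ) :
    ∫ x, f x ∂gammaMeasure a r
      = ∫ x in Ioi 0, r ^ a / Gamma a * x ^ (a - 1) * exp (-(r * x)) * f x := by
  rw [gammaMeasure, integral_withDensity_eq_integral_toReal_smul (measurable_gammaPDF a r)
      (ae_of_all _ fun _ ↦ ENNReal.ofReal_lt_top), ← integral_Ici_eq_integral_Ioi,
    ← setIntegral_eq_integral_of_forall_compl_eq_zero (s := Ici 0) fun x hx ↦ by
      simp [gammaPDF_of_neg (not_le.mp hx)]]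
  refine setIntegral_congr_fun measurableSet_Ici fun x (hx : 0 ≤ x) ↦ ?_
  rw [gammaPDF_of_nonneg hx, ENNReal.toReal_ofReal (by positivity), smul_eq_mul]

lemma integral_pow_gammaMeasure {a r : ℝ} (ha : 0 < a) (hr : 0 < r) (n : ℕ) :
    ∫ x, x ^ n ∂gammaMeasure a r = Gamma (a + n) / (Gamma a * r ^ n) := by
  have hpow : ∀ x ∈ Ioi (0 : ℝ), r ^ a / Gamma a * x ^ (a - 1) * exp (-(r * x)) * x ^ n
      = r ^ a / Gamma a * (x ^ (a + n - 1) * exp (-(r * x))) := fun x (hx : 0 < x) ↦ by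
    rw [show a + n - 1 = (a - 1) + n by ring, rpow_add hx, rpow_natCast]
    ring
  rw [integral_gammaMeasure_eq_setIntegral ha hr, setIntegral_congr_fun measurableSet_Ioi hpow,
    integral_const_mul, integral_rpow_mul_exp_neg_mul_Ioi (by positivity) hr,
    one_div, inv_rpow hr.le, rpow_add hr, rpow_natCast]
  have := (Gamma_pos_of_pos ha).ne'
  have := (rpow_pos_of_pos hr a).ne'
  field_simp

-- The moment formula is nonzero, so the Bochner integral is not the junk value `0`.
lemma integrable_pow_gammaMeasure {a r : ℝ} (ha : 0 < a) (hr : 0 < r) (n : ℕ) :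
    Integrable (fun x ↦ x ^ n) (gammaMeasure a r) :=
  .of_integral_ne_zero <| by
    rw [integral_pow_gammaMeasure ha hr]
    have := Gamma_pos_of_pos (show 0 < a + n by positivity)
    have := Gamma_pos_of_pos ha
    positivity

lemma integral_pow_expMeasure {r : ℝ} (hr : 0 < r) (n : ℕ) :
    ∫ x, x ^ n ∂expMeasure r = n.factorial / r ^ n := by
  rw [expMeasure, integral_pow_gammaMeasure one_pos hr, add_comm, Gamma_nat_eq_factorial,
    Gamma_one, one_mul]

lemma memLp_two_id_expMeasure {r : ℝ} (hr : 0 < r) : MemLp id 2 (expMeasure r) :=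
  (memLp_two_iff_integrable_sq aestronglyMeasurable_id).mpr
    (integrable_pow_gammaMeasure one_pos hr 2)

lemma integral_id_expMeasure {r : ℝ} (hr : 0 < r) : ∫ x, x ∂expMeasure r = r⁻¹ := by
  simpa using integral_pow_expMeasure hr 1

lemma variance_id_expMeasure {r : ℝ} (hr : 0 < r) : Var[id; expMeasure r] = (r ^ 2)⁻¹ := by
  have := isProbabilityMeasure_expMeasure hr
  rw [variance_eq_sub (memLp_two_id_expMeasure hr)]
  simp only [Pi.pow_apply, id, integral_pow_expMeasure hr 2, integral_id_expMeasure hr]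
  norm_num
  ring

namespace ProbabilityTheory

variable {Ω : Type*} [MeasurableSpace Ω] {μ : Measure Ω} {X Y : Ω → ℝ}

lemma HasLaw.memLp {ν : Measure ℝ} (hX : HasLaw X ν μ) {p : ENNReal} (h : MemLp id p ν) :
    MemLp X p μ := by
  rw [← hX.map_eq] at h
  exact h.comp_of_map hX.aemeasurable

lemma HasLaw.ae_nonneg_of_gammaMeasure {a r : ℝ} (hX : HasLaw X (gammaMeasure a r) μ) :
    0 ≤ᵐ[μ] X :=
  (hX.ae_iff (by fun_prop)).mpr (ae_nonneg_gammaMeasure a r)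

lemma HasLaw.integral_sq_of_gaussianReal [IsProbabilityMeasure μ] {m : ℝ} {s : NNReal}
    (hX : HasLaw X (gaussianReal m s) μ) : μ[X ^ 2] = s + m ^ 2 := by
  have := variance_eq_sub (hX.memLp (memLp_id_gaussianReal 2))
  rw [hX.variance_eq, variance_id_gaussianReal, hX.integral_eq, integral_id_gaussianReal] at this
  linarith

lemma sqrt_sq_ae_eq (hX : 0 ≤ᵐ[μ] X) : (fun ω ↦ √(X ω)) ^ 2 =ᵐ[μ] X := by
  filter_upwards [hX] with ω hω
  exact sq_sqrt hω

lemma memLp_two_sqrt (hX : Integrable X μ) (hX0 : 0 ≤ᵐ[μ] X) : MemLp (fun ω ↦ √(X ω)) 2 μ :=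
  (memLp_two_iff_integrable_sq hX.1.aemeasurable.sqrt.aestronglyMeasurable).mpr
    (hX.congr (sqrt_sq_ae_eq hX0).symm)

lemma HasLaw.memLp_two_sqrt_const_mul [IsFiniteMeasure μ] {r a : ℝ}
    (hX : HasLaw X (expMeasure r) μ) (hr : 0 < r) (ha : 0 ≤ a) : MemLp (fun ω ↦ √(a * X ω)) 2 μ :=
  memLp_two_sqrt (((hX.memLp (memLp_two_id_expMeasure hr)).integrable one_le_two).const_mul a)
    (hX.ae_nonneg_of_gammaMeasure.mono fun ω (h : 0 ≤ X ω) ↦ by positivity)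

lemma cov_eq_covariance [IsProbabilityMeasure μ] (hX : MemLp X 2 μ) (hY : MemLp Y 2 μ) :
    cov X Y μ = cov[X, Y; μ] :=
  (covariance_eq_sub hX hY).symm

lemma variance_sub_const_mul [IsProbabilityMeasure μ] (hX : MemLp X 2 μ) (hY : MemLp Y 2 μ)
    (c : ℝ) :
    Var[fun ω ↦ X ω - c * Y ω; μ] = Var[X; μ] + c ^ 2 * Var[Y; μ] - 2 * c * cov X Y μ := by
  rw [variance_fun_sub hX (hY.const_mul c), variance_const_mul, covariance_const_mul_right,
    cov_eq_covariance hX hY]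
  ring

lemma IndepFun.variance_const_mul_add_const_mul (h : IndepFun X Y μ) (hX : MemLp X 2 μ)
    (hY : MemLp Y 2 μ) (a b : ℝ) :
    Var[fun ω ↦ a * X ω + b * Y ω; μ] = a ^ 2 * Var[X; μ] + b ^ 2 * Var[Y; μ] := by
  have hab : IndepFun (fun ω ↦ a * X ω) (fun ω ↦ b * Y ω) μ :=
    h.comp (measurable_const_mul a) (measurable_const_mul b)
  rw [hab.variance_fun_add (hX.const_mul a) (hY.const_mul b), variance_const_mul,
    variance_const_mul]

lemma IndepFun.sq (h : IndepFun X Y μ) : IndepFun (X ^ 2) (Y ^ 2) μ :=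
  h.comp (measurable_id.pow_const 2) (measurable_id.pow_const 2) |>.congr (by rfl) (by rfl)

lemma IndepFun.memLp_two_mul (h : IndepFun X Y μ) (hX : MemLp X 2 μ) (hY : MemLp Y 2 μ) :
    MemLp (X * Y) 2 μ := by
  refine (memLp_two_iff_integrable_sq (hX.1.mul hY.1)).mpr ?_
  have := h.sq.integrable_mul hX.integrable_sq hY.integrable_sq
  rwa [← mul_pow] at this

lemma variance_mul_add_of_indepFun [IsProbabilityMeasure μ] {U V Z : Ω → ℝ} (hU : MemLp U 2 μ)
    (hV : MemLp V 2 μ) (hZ : MemLp Z 2 μ) (hind : IndepFun (fun ω ↦ (U ω, V ω)) Z μ)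
    (hZ0 : μ[Z] = 0) :
    Var[fun ω ↦ U ω * Z ω + V ω; μ] = μ[U ^ 2] * μ[Z ^ 2] + Var[V; μ] := by
  have hUZ : IndepFun U Z μ := hind.comp measurable_fst measurable_id
  have hUVZ : IndepFun (U * V) Z μ := hind.comp (measurable_fst.mul measurable_snd) measurable_id
  have hUZ_L2 : MemLp (U * Z) 2 μ := hUZ.memLp_two_mul hU hZ
  have hmean : μ[U * Z] = 0 := by
    rw [hUZ.integral_mul_eq_mul_integral hU.1 hZ.1, hZ0, mul_zero]
  have hcov : cov[U * Z, V; μ] = 0 := by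
    rw [covariance_eq_sub hUZ_L2 hV, hmean, zero_mul, sub_zero, mul_right_comm,
      hUVZ.integral_mul_eq_mul_integral (hU.1.mul hV.1) hZ.1, hZ0, mul_zero]
  have hsecond : μ[(U * Z) ^ 2] = μ[U ^ 2] * μ[Z ^ 2] := by
    rw [mul_pow, hUZ.sq.integral_mul_eq_mul_integral (hU.1.pow 2) (hZ.1.pow 2)]
  rw [show (fun ω ↦ U ω * Z ω + V ω) = U * Z + V from rfl, variance_add hUZ_L2 hV, hcov,
    variance_eq_sub hUZ_L2, hmean, hsecond]
  ring

end ProbabilityTheory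

namespace TwoState

variable {Ω : Type*} [MeasurableSpace Ω] {μ : Measure Ω} [IsProbabilityMeasure μ]
  {β₁ β₂ D : ℝ} {τ0 τ1 Z : Ω → ℝ}

lemma memLp_displacement (hβ₁ : 0 < β₁) (hβ₂ : 0 < β₂) (hD : 0 ≤ D)
    (hτ0 : HasLaw τ0 (expMeasure β₂) μ) (hτ1 : HasLaw τ1 (expMeasure β₁) μ)
    (hZ : HasLaw Z (gaussianReal 0 1) μ) (hZτ : IndepFun (fun ω ↦ (τ0 ω, τ1 ω)) Z μ) (v : ℝ) :
    MemLp (fun ω ↦ √(2 * D * τ0 ω) * Z ω + v * τ1 ω) 2 μ :=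
  ((hZτ.comp (φ := fun p : ℝ × ℝ ↦ √(2 * D * p.1)) (by fun_prop) measurable_id).memLp_two_mul
      (hτ0.memLp_two_sqrt_const_mul (a := 2 * D) hβ₂ (by positivity))
      (hZ.memLp (memLp_id_gaussianReal 2))).add
    ((hτ1.memLp (memLp_two_id_expMeasure hβ₁)).const_mul v)

lemma variance_displacement_sub_const_mul_duration (hβ₁ : 0 < β₁) (hβ₂ : 0 < β₂) (hD : 0 ≤ D)
    (hτ0 : HasLaw τ0 (expMeasure β₂) μ) (hτ1 : HasLaw τ1 (expMeasure β₁) μ)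
    (hZ : HasLaw Z (gaussianReal 0 1) μ) (hZτ : IndepFun (fun ω ↦ (τ0 ω, τ1 ω)) Z μ)
    (hτ : IndepFun τ0 τ1 μ) (v c : ℝ) :
    Var[fun ω ↦ √(2 * D * τ0 ω) * Z ω + v * τ1 ω - c * (τ0 ω + τ1 ω); μ]
      = 2 * D / β₂ + c ^ 2 / β₂ ^ 2 + (v - c) ^ 2 / β₁ ^ 2 := by
  have hτ0L2 := hτ0.memLp (memLp_two_id_expMeasure hβ₂)
  have hτ1L2 := hτ1.memLp (memLp_two_id_expMeasure hβ₁)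
  have hV : MemLp (fun ω ↦ -c * τ0 ω + (v - c) * τ1 ω) 2 μ :=
    (hτ0L2.const_mul _).add (hτ1L2.const_mul _)
  have hZ0 : μ[Z] = 0 := hZ.integral_eq.trans integral_id_gaussianReal
  have hUV_Z : IndepFun (fun ω ↦ (√(2 * D * τ0 ω), -c * τ0 ω + (v - c) * τ1 ω)) Z μ :=
    hZτ.comp (φ := fun p : ℝ × ℝ ↦ (√(2 * D * p.1), -c * p.1 + (v - c) * p.2)) (by fun_prop)
      measurable_id
  have h2Dτ0 : 0 ≤ᵐ[μ] fun ω ↦ 2 * D * τ0 ω :=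
    hτ0.ae_nonneg_of_gammaMeasure.mono fun ω (h : 0 ≤ τ0 ω) ↦ by positivity
  have hU_sq : μ[(fun ω ↦ √(2 * D * τ0 ω)) ^ 2] = 2 * D / β₂ := by
    rw [integral_congr_ae (sqrt_sq_ae_eq h2Dτ0), integral_const_mul, hτ0.integral_eq,
      integral_id_expMeasure hβ₂, div_eq_mul_inv]
  rw [show (fun ω ↦ √(2 * D * τ0 ω) * Z ω + v * τ1 ω - c * (τ0 ω + τ1 ω))
      = fun ω ↦ √(2 * D * τ0 ω) * Z ω + (-c * τ0 ω + (v - c) * τ1 ω) by funext; ring,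
    variance_mul_add_of_indepFun (memLp_two_sqrt
        ((hτ0L2.integrable one_le_two).const_mul (2 * D)) h2Dτ0) hV
      (hZ.memLp (memLp_id_gaussianReal 2)) hUV_Z hZ0,
    hτ.variance_const_mul_add_const_mul hτ0L2 hτ1L2, hU_sq, hZ.integral_sq_of_gaussianReal,
    hτ0.variance_eq, hτ1.variance_eq, variance_id_expMeasure hβ₁, variance_id_expMeasure hβ₂]
  norm_num
  ring

end TwoState

/-- in the 2-state model (diffusing base state `0` with `τ(0) ∼ Exp(β₂)`,
`ξ(0) = √(2D τ(0)) Z`, transport state `1` with `τ(1) ∼ Exp(β₁)`, `ξ(1) = v τ(1)`,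
`τ(0), τ(1), Z` mutually independent), the effective diffusivity
`D_eff := (1/(2E(ΔT)))(Var(ΔX) + v_eff² Var(ΔT) − 2 v_eff Cov(ΔX, ΔT))`, with
`v_eff = v β₂/(β₁+β₂)`, equals `D β₁/(β₁+β₂) + v² β₁ β₂/(β₁+β₂)³`. -/
theorem two_state_effective_diffusivity
    {Ω : Type*} [MeasurableSpace Ω] (μ : Measure Ω) [IsProbabilityMeasure μ]
    (β₁ β₂ D v : ℝ) (hβ₁ : 0 < β₁) (hβ₂ : 0 < β₂) (hD : 0 < D)
    (τ0 τ1 Z : Ω → ℝ)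
    (hτ0meas : Measurable τ0) (hτ1meas : Measurable τ1) (hZmeas : Measurable Z)
    (hτ0law : Measure.map τ0 μ = expMeasure β₂)
    (hτ1law : Measure.map τ1 μ = expMeasure β₁)
    (hZlaw : Measure.map Z μ = gaussianReal 0 1)
    (hindep : iIndepFun
      ![τ0, τ1, Z] μ) :
    (1 / (2 * ∫ ω, (τ0 ω + τ1 ω) ∂μ)) *
      (variance (fun ω => Real.sqrt (2 * D * τ0 ω) * Z ω + v * τ1 ω) μ +
        (v * β₂ / (β₁ + β₂)) ^ 2 * variance (fun ω => τ0 ω + τ1 ω) μ -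
        2 * (v * β₂ / (β₁ + β₂)) *
          cov (fun ω => Real.sqrt (2 * D * τ0 ω) * Z ω + v * τ1 ω)
            (fun ω => τ0 ω + τ1 ω) μ) =
      D * β₁ / (β₁ + β₂) + v ^ 2 * β₁ * β₂ / (β₁ + β₂) ^ 3 := by
  have hτ0 : HasLaw τ0 (expMeasure β₂) μ := ⟨hτ0meas.aemeasurable, hτ0law⟩
  have hτ1 : HasLaw τ1 (expMeasure β₁) μ := ⟨hτ1meas.aemeasurable, hτ1law⟩
  have hZ : HasLaw Z (gaussianReal 0 1) μ := ⟨hZmeas.aemeasurable, hZlaw⟩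
  have hZτ : IndepFun (fun ω ↦ (τ0 ω, τ1 ω)) Z μ := by
    simpa using hindep.indepFun_prodMk (by simp [Fin.forall_fin_succ, *]) 0 1 2
      (by decide) (by decide)
  have hτ : IndepFun τ0 τ1 μ := by simpa using hindep.indepFun (show (0 : Fin 3) ≠ 1 by decide)
  have hτ0L2 := hτ0.memLp (memLp_two_id_expMeasure hβ₂)
  have hτ1L2 := hτ1.memLp (memLp_two_id_expMeasure hβ₁)
  rw [← variance_sub_const_mul (Y := fun ω ↦ τ0 ω + τ1 ω)
      (TwoState.memLp_displacement hβ₁ hβ₂ hD.le hτ0 hτ1 hZ hZτ v) (hτ0L2.add hτ1L2),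
    TwoState.variance_displacement_sub_const_mul_duration hβ₁ hβ₂ hD.le hτ0 hτ1 hZ hZτ hτ,
    integral_add (hτ0L2.integrable one_le_two) (hτ1L2.integrable one_le_two), hτ0.integral_eq,
    hτ1.integral_eq, integral_id_expMeasure hβ₁, integral_id_expMeasure hβ₂]
  field_simp
  ring
end

section
/- Let (ΔX_n, ΔT_n), n ≥ 1, be iid pairs with E(ΔT) = μ ∈ (0,∞), a = E(ΔX)/E(ΔT), and σ² = Var(ΔX − aΔT) < ∞, and let X(t) be a process whose increments over the cycles [T_{n-1}, T_n) (with T_n = Σ_{k≤n} ΔT_k) are ΔX_n, and whose within-cycle excursion M = sup over a cycle of |X(t) − X(T_{n-1})| has finite mean. Then X(t)/t → a almost surely as t → ∞. -/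
/-!
By the strong law of large numbers the regeneration times satisfy `T n / n → E ΔT > 0` and the
values `X (T n) = ΔX_1 + ⋯ + ΔX_n` satisfy `X (T n) / n → E ΔX`, while Borel–Cantelli shows
that identically distributed integrable excursion bounds are `o(n)`. Writing `N t` for the index
of the cycle containing `t`, we get `t / N t → E ΔT` and `X t / N t → E ΔX`, hence
`X t / t → E ΔX / E ΔT`.
-/

open MeasureTheory ProbabilityTheory Filter Topology

lemma tendsto_succ_div_natCast {u : ℕ → ℝ} {c : ℝ}
    (hu : Tendsto (fun n : ℕ => u n / n) atTop (𝓝 c)) :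
    Tendsto (fun n : ℕ => u (n + 1) / n) atTop (𝓝 c) := by
  have hshift : Tendsto (fun n : ℕ => u (n + 1) / ((n : ℝ) + 1)) atTop (𝓝 c) := by
    simpa [Function.comp_def] using hu.comp (tendsto_add_atTop_nat 1)
  have hratio : Tendsto (fun n : ℕ => 1 + 1 / (n : ℝ)) atTop (𝓝 1) := by
    simpa using tendsto_one_div_atTop_nhds_zero_nat.const_add (1 : ℝ)
  refine (mul_one c ▸ hshift.mul hratio).congr' ?_
  filter_upwards [eventually_ne_atTop 0] with n hn
  field_simp

/-- The index `n` of the cycle `[τ n, τ (n + 1))` containing `t`. -/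
noncomputable def cycleIndex (τ : ℕ → ℝ) (t : ℝ) : ℕ := sSup {n | τ n ≤ t}

section CycleIndex

variable {τ : ℕ → ℝ}

lemma bddAbove_setOf_le_of_tendsto_atTop (hτ : Tendsto τ atTop atTop) (t : ℝ) :
    BddAbove {n | τ n ≤ t} := by
  obtain ⟨K, hK⟩ := eventually_atTop.1 (hτ.eventually_gt_atTop t)
  exact ⟨K, fun n hn => le_of_not_gt fun h => (hK n h.le).not_ge hn⟩

lemma le_cycleIndex (hτ : Tendsto τ atTop atTop) {k : ℕ} {t : ℝ} (h : τ k ≤ t) :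
    k ≤ cycleIndex τ t :=
  le_csSup (bddAbove_setOf_le_of_tendsto_atTop hτ t) h

lemma apply_cycleIndex_le (hτ : Tendsto τ atTop atTop) {t : ℝ} (ht : τ 0 ≤ t) :
    τ (cycleIndex τ t) ≤ t :=
  Nat.sSup_mem ⟨0, ht⟩ (bddAbove_setOf_le_of_tendsto_atTop hτ t)

lemma lt_apply_cycleIndex_succ (hτ : Tendsto τ atTop atTop) (t : ℝ) :
    t < τ (cycleIndex τ t + 1) :=
  lt_of_not_ge fun h => (le_cycleIndex hτ h).not_gt (Nat.lt_succ_self _)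

lemma tendsto_cycleIndex_atTop (hτ : Tendsto τ atTop atTop) :
    Tendsto (cycleIndex τ) atTop atTop :=
  tendsto_atTop.2 fun K => (eventually_ge_atTop (τ K)).mono fun _ ht => le_cycleIndex hτ ht

end CycleIndex

theorem tendsto_div_of_cycle_bounds {τ s m : ℕ → ℝ} {f : ℝ → ℝ} {b c : ℝ} (hc : 0 < c)
    (hτ : Tendsto (fun n : ℕ => τ n / n) atTop (𝓝 c))
    (hs : Tendsto (fun n : ℕ => s n / n) atTop (𝓝 b))
    (hm : Tendsto (fun n : ℕ => m n / n) atTop (𝓝 0))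
    (hf : ∀ n t, τ n ≤ t → t ≤ τ (n + 1) → |f t - s n| ≤ m n) :
    Tendsto (fun t : ℝ => f t / t) atTop (𝓝 (b / c)) := by
  have hτ_top : Tendsto τ atTop atTop := by
    refine (hτ.pos_mul_atTop hc tendsto_natCast_atTop_atTop).congr' ?_
    filter_upwards [eventually_ne_atTop 0] with n hn
    field_simp
  set N := cycleIndex τ
  have hN := tendsto_cycleIndex_atTop hτ_top
  have hcycle : ∀ᶠ t in atTop, 0 < (N t : ℝ) ∧ τ (N t) ≤ t ∧ t ≤ τ (N t + 1) := by
    filter_upwards [hN.eventually_ge_atTop 1, eventually_ge_atTop (τ 0)] with t h1 h0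
    exact ⟨by exact_mod_cast h1, apply_cycleIndex_le hτ_top h0,
      (lt_apply_cycleIndex_succ hτ_top t).le⟩
  have htime : Tendsto (fun t => t / N t) atTop (𝓝 c) :=
    tendsto_of_tendsto_of_tendsto_of_le_of_le' (hτ.comp hN)
      ((tendsto_succ_div_natCast hτ).comp hN)
      (hcycle.mono fun _ h => div_le_div_of_nonneg_right h.2.1 h.1.le)
      (hcycle.mono fun _ h => div_le_div_of_nonneg_right h.2.2 h.1.le)
  have hreward : Tendsto (fun t => f t / N t) atTop (𝓝 b) := by
    have hlo : Tendsto (fun n : ℕ => (s n - m n) / n) atTop (𝓝 b) := by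
      simpa only [sub_div, sub_zero] using hs.sub hm
    have hhi : Tendsto (fun n : ℕ => (s n + m n) / n) atTop (𝓝 b) := by
      simpa only [add_div, add_zero] using hs.add hm
    refine tendsto_of_tendsto_of_tendsto_of_le_of_le' (hlo.comp hN) (hhi.comp hN) ?_ ?_ <;>
    · filter_upwards [hcycle] with t ⟨hpos, hlow, hup⟩
      have hdev := abs_le.1 (hf _ t hlow hup)
      exact div_le_div_of_nonneg_right (by linarith) hpos.le
  refine (hreward.div htime hc.ne').congr' ?_
  filter_upwards [hcycle, eventually_gt_atTop 0] with t h ht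
  simp only [Pi.div_apply]
  field_simp [h.1.ne']

section IdentDistrib

variable {Ω : Type*} [MeasurableSpace Ω] {μ : Measure Ω} [IsProbabilityMeasure μ]
  {Z : ℕ → Ω → ℝ}

lemma ae_eventually_abs_le_mul_of_identDistrib (hident : ∀ n, IdentDistrib (Z n) (Z 0) μ μ)
    (hint : Integrable (Z 0) μ) {ε : ℝ} (hε : 0 < ε) :
    ∀ᵐ ω ∂μ, ∀ᶠ n : ℕ in atTop, |Z n ω| ≤ ε * n := by
  set V : Ω → ℝ := fun ω => |Z 0 ω| / ε
  have hexceed : ∀ n : ℕ,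
      μ {ω | |Z n ω| / ε ∈ Set.Ioi (n : ℝ)} = μ {ω | V ω ∈ Set.Ioi (n : ℝ)} :=
    fun n => ((hident n).comp (measurable_abs.div_const ε)).measure_mem_eq measurableSet_Ioi
  have hsum : ∑' n : ℕ, μ {ω | V ω ∈ Set.Ioi (n : ℝ)} ≠ ⊤ := by
    let _ : MeasureSpace Ω := ⟨μ⟩
    exact (tsum_prob_mem_Ioi_lt_top (hint.abs.div_const ε) fun ω => by positivity).ne
  filter_upwards [ae_eventually_notMem (tsum_congr hexceed ▸ hsum)] with ω hω
  filter_upwards [hω] with n hn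
  simpa [div_le_iff₀ hε, mul_comm] using hn

theorem ae_tendsto_div_natCast_zero_of_identDistrib
    (hident : ∀ n, IdentDistrib (Z n) (Z 0) μ μ) (hint : Integrable (Z 0) μ) :
    ∀ᵐ ω ∂μ, Tendsto (fun n : ℕ => Z n ω / n) atTop (𝓝 0) := by
  have hbound : ∀ᵐ ω ∂μ, ∀ k : ℕ, ∀ᶠ n : ℕ in atTop, |Z n ω| ≤ 1 / (k + 1) * n :=
    ae_all_iff.2 fun k => ae_eventually_abs_le_mul_of_identDistrib hident hint (by positivity)
  filter_upwards [hbound] with ω hω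
  refine NormedAddGroup.tendsto_nhds_zero.2 fun ε hε => ?_
  obtain ⟨k, hk⟩ := exists_nat_one_div_lt hε
  filter_upwards [hω k, eventually_gt_atTop 0] with n hn hpos
  have hpos' : (0 : ℝ) < n := Nat.cast_pos.2 hpos
  rw [Real.norm_eq_abs, abs_div, Nat.abs_cast, div_lt_iff₀ hpos']
  linarith [mul_lt_mul_of_pos_right hk hpos']

end IdentDistrib

theorem regenerative_increments_lln_general
    {Ω : Type*} [MeasurableSpace Ω] (μ : Measure Ω) [IsProbabilityMeasure μ]
    (Y : ℕ → Ω → ℝ × ℝ)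
    (hindep : iIndepFun (β := fun _ : ℕ => ℝ × ℝ) Y μ)
    (hident : ∀ n, IdentDistrib (Y n) (Y 0) μ μ)
    (hint1 : Integrable (fun ω => (Y 0 ω).1) μ)
    (hint2 : Integrable (fun ω => (Y 0 ω).2) μ)
    (hμpos : 0 < ∫ ω, (Y 0 ω).2 ∂μ)
    (T : ℕ → Ω → ℝ) (hT : ∀ n ω, T n ω = ∑ k ∈ Finset.range n, (Y k ω).2)
    (X : ℝ → Ω → ℝ) (hX0 : ∀ ω, X 0 ω = 0)
    (hinc : ∀ n ω, X (T (n + 1) ω) ω - X (T n ω) ω = (Y n ω).1)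
    (Mb : ℕ → Ω → ℝ)
    (hMb : ∀ n ω t, T n ω ≤ t → t ≤ T (n + 1) ω → |X t ω - X (T n ω) ω| ≤ Mb n ω)
    (hMbident : ∀ n, IdentDistrib (Mb n) (Mb 0) μ μ)
    (hMbint : Integrable (Mb 0) μ) :
    ∀ᵐ ω ∂μ, Tendsto (fun t : ℝ => X t ω / t) atTop
      (nhds ((∫ ω', (Y 0 ω').1 ∂μ) / ∫ ω', (Y 0 ω').2 ∂μ)) := by
  have hdur : ∀ᵐ ω ∂μ, Tendsto (fun n : ℕ => T n ω / n) atTop (𝓝 (∫ ω', (Y 0 ω').2 ∂μ)) := by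
    simpa only [hT] using strong_law_ae_real (fun n ω => (Y n ω).2) hint2
      (fun i j hij => (hindep.indepFun hij).comp measurable_snd measurable_snd)
      (fun i => (hident i).comp measurable_snd)
  have hdisp := strong_law_ae_real (fun n ω => (Y n ω).1) hint1
    (fun i j hij => (hindep.indepFun hij).comp measurable_fst measurable_fst)
    (fun i => (hident i).comp measurable_fst)
  have hexc := ae_tendsto_div_natCast_zero_of_identDistrib hMbident hMbint
  filter_upwards [hdur, hdisp, hexc] with ω hτ hs hm
  have hXT : ∀ n, X (T n ω) ω = ∑ k ∈ Finset.range n, (Y k ω).1 := fun n => by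
    rw [← Finset.sum_congr rfl fun k _ => hinc k ω, Finset.sum_range_sub (fun k => X (T k ω) ω),
      hT 0, Finset.sum_range_zero, hX0, sub_zero]
  refine tendsto_div_of_cycle_bounds hμpos hτ hs hm fun n t h₁ h₂ => ?_
  rw [← hXT]
  exact hMb n ω t h₁ h₂

/-- law of large numbers for a process with regenerative increments
(Serfozo).  `Y n = (ΔX_{n+1}, ΔT_{n+1})` are iid cycle (displacement, duration) pairs with
`ΔT > 0` a.s., mean cycle duration `μ' = E(ΔT) ∈ (0, ∞)`, `a = E(ΔX)/E(ΔT)`,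
`σ² = Var(ΔX − aΔT) < ∞`; `T n` are the regeneration times (partial sums of the durations),
the increments of the path `X` over cycles are the `ΔX_n`, and the within-cycle excursions
are dominated by identically distributed random variables `Mb n` with finite mean.  Then
`X(t)/t → a = E(ΔX)/E(ΔT)` almost surely as `t → ∞`. -/
theorem regenerative_increments_lln
    {Ω : Type*} [MeasurableSpace Ω] (μ : Measure Ω) [IsProbabilityMeasure μ]
    (Y : ℕ → Ω → ℝ × ℝ) (hYmeas : ∀ n, Measurable (Y n))
    (hindep : iIndepFun (β := fun _ : ℕ => ℝ × ℝ) Y μ)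
    (hident : ∀ n, IdentDistrib (Y n) (Y 0) μ μ)
    (hint1 : Integrable (fun ω => (Y 0 ω).1) μ)
    (hint2 : Integrable (fun ω => (Y 0 ω).2) μ)
    (hTpos : ∀ᵐ ω ∂μ, ∀ n, 0 < (Y n ω).2)
    (hμpos : 0 < ∫ ω, (Y 0 ω).2 ∂μ)
    (hσ : MemLp (fun ω => (Y 0 ω).1 -
      ((∫ ω', (Y 0 ω').1 ∂μ) / ∫ ω', (Y 0 ω').2 ∂μ) * (Y 0 ω).2) 2 μ)
    (T : ℕ → Ω → ℝ) (hT : ∀ n ω, T n ω = ∑ k ∈ Finset.range n, (Y k ω).2)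
    (X : ℝ → Ω → ℝ) (hX0 : ∀ ω, X 0 ω = 0)
    (hinc : ∀ n ω, X (T (n + 1) ω) ω - X (T n ω) ω = (Y n ω).1)
    (Mb : ℕ → Ω → ℝ) (hMbmeas : ∀ n, Measurable (Mb n))
    (hMb : ∀ n ω t, T n ω ≤ t → t ≤ T (n + 1) ω → |X t ω - X (T n ω) ω| ≤ Mb n ω)
    (hMbident : ∀ n, IdentDistrib (Mb n) (Mb 0) μ μ)
    (hMbint : Integrable (Mb 0) μ) :
    ∀ᵐ ω ∂μ, Tendsto (fun t : ℝ => X t ω / t) atTop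
      (nhds ((∫ ω', (Y 0 ω').1 ∂μ) / ∫ ω', (Y 0 ω').2 ∂μ)) :=
  regenerative_increments_lln_general μ Y hindep hident hint1 hint2 hμpos T hT X hX0 hinc Mb hMb
    hMbident hMbint
end
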